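/- Suppose the solutions of the boundary-value problems BVP(ε) depend continuously on ε at ε = 0 (i.e., conditions (∗) and (∗∗) of continuous dependence hold). Then condition (I) holds: ‖A(·;ε) − A(·;0)‖_{n−1,∞} → 0 as ε → 0+. -/

import Mathlib

open MeasureTheory Set Filter Topology
open scoped NNReal

attribute [local instance] Matrix.linftyOpNormedAddCommGroup Matrix.linftyOpNormedSpace

noncomputable section

/-- The least Lipschitz constant of `g` on `[a,b]`. -/
def lipConstOn {E : Type*} [NormedAddCommGroup E] (a b : ℝ) (g : ℝ → E) : ℝ :=
  sInf {L : ℝ | 0 ≤ L ∧ ∀ s ∈ Icc a b, ∀ t ∈ Icc a b, ‖g s - g t‖ ≤ L * |s - t|}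

/-- The sup-norm of `g` on `[a,b]`. -/
def supNormOn {E : Type*} [NormedAddCommGroup E] (a b : ℝ) (g : ℝ → E) : ℝ :=
  ⨆ t : Icc a b, ‖g t.1‖

/-- Membership in the Sobolev space `W^k_∞([a,b]; E)`: for `k = 0`, bounded measurable
functions; for `k ≥ 1`, `(k-1)`-times continuously differentiable functions on `[a,b]`
whose `(k-1)`-th derivative is Lipschitz on `[a,b]`. -/
def MemW {E : Type*} [NormedAddCommGroup E] [NormedSpace ℝ E] :
    ℕ → ℝ → ℝ → (ℝ → E) → Prop
  | 0, a, b, g =>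
      AEStronglyMeasurable g (volume.restrict (Icc a b)) ∧
        ∃ C : ℝ, ∀ t ∈ Icc a b, ‖g t‖ ≤ C
  | (k+1), a, b, g =>
      ContDiffOn ℝ k g (Icc a b) ∧
        ∃ K : ℝ≥0, LipschitzOnWith K (iteratedDerivWithin k g (Icc a b)) (Icc a b)

/-- The norm of the Sobolev space `W^k_∞([a,b]; E)`: for `k = 0`, the essential supremum
norm; for `k ≥ 1`, the sum of the sup-norms of the derivatives of order `≤ k-1` plus the
least Lipschitz constant of the `(k-1)`-th derivative. -/
def WNorm {E : Type*} [NormedAddCommGroup E] [NormedSpace ℝ E] :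
    ℕ → ℝ → ℝ → (ℝ → E) → ℝ
  | 0, a, b, g => (eLpNorm g ⊤ (volume.restrict (Icc a b))).toReal
  | (k+1), a, b, g =>
      (∑ j ∈ Finset.range (k+1), supNormOn a b (iteratedDerivWithin j g (Icc a b)))
        + lipConstOn a b (iteratedDerivWithin k g (Icc a b))

/-- `y` solves the differential equation `y' + A y = f` almost everywhere on `[a,b]`. -/
def SolvesODE {m : ℕ} (a b : ℝ) (A : ℝ → Matrix (Fin m) (Fin m) ℂ)
    (f : ℝ → (Fin m → ℂ)) (y : ℝ → (Fin m → ℂ)) : Prop :=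
  ∀ᵐ t ∂(volume.restrict (Icc a b)),
    HasDerivWithinAt y (f t - (A t).mulVec (y t)) (Icc a b) t

/-- `B` is a linear map on functions, bounded with respect to the `W^n_∞` norm. -/
def BoundedLinearB {m : ℕ} (n : ℕ) (a b : ℝ)
    (B : (ℝ → (Fin m → ℂ)) → (Fin m → ℂ)) : Prop :=
  (∀ y z : ℝ → (Fin m → ℂ), B (y + z) = B y + B z) ∧
  (∀ (r : ℂ) (y : ℝ → (Fin m → ℂ)), B (r • y) = r • B y) ∧
  ∃ C : ℝ, ∀ y, MemW n a b y → ‖B y‖ ≤ C * WNorm n a b y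

/-- `y` is a solution of the boundary-value problem `y' + A y = f` a.e. on `[a,b]`,
`B y = c`, belonging to `W^n_∞([a,b];ℂ^m)`. -/
def IsBVPSol {m : ℕ} (n : ℕ) (a b : ℝ) (A : ℝ → Matrix (Fin m) (Fin m) ℂ)
    (B : (ℝ → (Fin m → ℂ)) → (Fin m → ℂ)) (f : ℝ → (Fin m → ℂ)) (c : Fin m → ℂ)
    (y : ℝ → (Fin m → ℂ)) : Prop :=
  MemW n a b y ∧ SolvesODE a b A f y ∧ B y = c

/-- The boundary-value problem `y' + A y = f`, `B y = c` has, for every right-hand side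
`(f, c)`, a solution in `W^n_∞`, unique up to values on `[a,b]`. -/
def UniquelySolvable {m : ℕ} (n : ℕ) (a b : ℝ) (A : ℝ → Matrix (Fin m) (Fin m) ℂ)
    (B : (ℝ → (Fin m → ℂ)) → (Fin m → ℂ)) : Prop :=
  ∀ f : ℝ → (Fin m → ℂ), MemW (n-1) a b f → ∀ c : Fin m → ℂ,
    (∃ y, IsBVPSol n a b A B f c y) ∧
    (∀ y z, IsBVPSol n a b A B f c y → IsBVPSol n a b A B f c z →
      ∀ t ∈ Icc a b, y t = z t)

/-- Condition (0): the homogeneous limit problem has only the trivial solution. -/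
def CondZero {m : ℕ} (n : ℕ) (a b : ℝ) (A : ℝ → Matrix (Fin m) (Fin m) ℂ)
    (B : (ℝ → (Fin m → ℂ)) → (Fin m → ℂ)) : Prop :=
  ∀ y, IsBVPSol n a b A B 0 0 y → ∀ t ∈ Icc a b, y t = 0

/-- Condition (I): `‖A(·;ε) − A(·;0)‖_{n−1,∞} → 0` as `ε → 0+`. -/
def CondI {m : ℕ} (n : ℕ) (a b : ℝ) (A : ℝ → ℝ → Matrix (Fin m) (Fin m) ℂ) : Prop :=
  Tendsto (fun ε => WNorm (n-1) a b (fun t => A ε t - A 0 t)) (𝓝[>] (0:ℝ)) (𝓝 0)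

/-- Condition (II): `B(ε)y → B(0)y` as `ε → 0+`, for every `y ∈ W^n_∞`. -/
def CondII {m : ℕ} (n : ℕ) (a b : ℝ)
    (B : ℝ → (ℝ → (Fin m → ℂ)) → (Fin m → ℂ)) : Prop :=
  ∀ y, MemW n a b y → Tendsto (fun ε => B ε y) (𝓝[>] (0:ℝ)) (𝓝 (B 0 y))

/-- Continuous dependence of the solutions of the boundary-value problems on the
parameter `ε` at `ε = 0`: conditions (∗) and (∗∗). -/
def ContDep {m : ℕ} (n : ℕ) (a b ε₀ : ℝ)
    (A : ℝ → ℝ → Matrix (Fin m) (Fin m) ℂ)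
    (B : ℝ → (ℝ → (Fin m → ℂ)) → (Fin m → ℂ)) : Prop :=
  ∃ ε₁ : ℝ, 0 < ε₁ ∧ ε₁ < ε₀ ∧
    (∀ ε ∈ Ico (0:ℝ) ε₁, UniquelySolvable n a b (A ε) (B ε)) ∧
    (∀ (f : ℝ → ℝ → (Fin m → ℂ)) (c : ℝ → (Fin m → ℂ)) (y : ℝ → ℝ → (Fin m → ℂ)),
      (∀ ε ∈ Ico (0:ℝ) ε₁, MemW (n-1) a b (f ε)) →
      Tendsto (fun ε => WNorm (n-1) a b (fun t => f ε t - f 0 t)) (𝓝[>] (0:ℝ)) (𝓝 0) →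
      Tendsto c (𝓝[>] (0:ℝ)) (𝓝 (c 0)) →
      (∀ ε ∈ Ico (0:ℝ) ε₁, IsBVPSol n a b (A ε) (B ε) (f ε) (c ε) (y ε)) →
      Tendsto (fun ε => WNorm n a b (fun t => y ε t - y 0 t)) (𝓝[>] (0:ℝ)) (𝓝 0))

/-!
Test the problems with the data `f = A(·;0) eⱼ`, `c = B(0) eⱼ`, which at `ε = 0` are solved by
the constant `eⱼ`. By continuous dependence the solutions `yⱼ(ε)` tend to `eⱼ` in `W^n_∞`, so the
matrix `Z(ε)` with columns `yⱼ(ε) - eⱼ` tends to `0` in `W^n_∞`, and it solves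
`Z' = -(A(ε) - A(0)) - A(ε) Z`. Hence `M = A(ε) - A(0)` satisfies `M = -(Z' + A(0) Z + M Z)`.
Since `W^{n-1}_∞` is a Banach algebra up to a constant, the term `M Z` is absorbed once `Z` is
small, and `‖M‖_{n-1,∞} ≤ C ‖Z(ε)‖_{n,∞} → 0`. For `n = 1` the same estimate is done pointwise
almost everywhere, bounding `Z'` by the Lipschitz constant of `Z`.
-/

attribute [local instance] Matrix.linftyOpNormedRing Matrix.linftyOpNormedAlgebra

theorem LipschitzOnWith.congr {α β : Type*} [PseudoEMetricSpace α] [PseudoEMetricSpace β]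
    {K : ℝ≥0} {s : Set α} {f g : α → β} (hf : LipschitzOnWith K f s) (hfg : EqOn f g s) :
    LipschitzOnWith K g s := fun x hx y hy => by
  rw [← hfg hx, ← hfg hy]
  exact hf hx hy

section SupLip

variable {E : Type*} [NormedAddCommGroup E] {a b : ℝ} {g h : ℝ → E}

theorem supNormOn_nonneg (g : ℝ → E) : 0 ≤ supNormOn a b g :=
  Real.iSup_nonneg fun _ => norm_nonneg _

theorem supNormOn_le (hab : a ≤ b) {C : ℝ} (hC : ∀ t ∈ Icc a b, ‖g t‖ ≤ C) :
    supNormOn a b g ≤ C :=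
  have : Nonempty (Icc a b) := ⟨⟨a, left_mem_Icc.2 hab⟩⟩
  ciSup_le fun t => hC t t.2

theorem norm_le_supNormOn (hg : ContinuousOn g (Icc a b)) {t : ℝ} (ht : t ∈ Icc a b) :
    ‖g t‖ ≤ supNormOn a b g := by
  obtain ⟨C, hC⟩ := isCompact_Icc.exists_bound_of_continuousOn hg
  exact le_ciSup (f := fun s : Icc a b => ‖g s‖) ⟨C, by rintro _ ⟨s, rfl⟩; exact hC s s.2⟩ ⟨t, ht⟩

theorem supNormOn_congr (hgh : EqOn g h (Icc a b)) : supNormOn a b g = supNormOn a b h :=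
  iSup_congr fun t => by rw [hgh t.2]

theorem lipConstOn_nonneg (g : ℝ → E) : 0 ≤ lipConstOn a b g :=
  Real.sInf_nonneg fun _ hL => hL.1

theorem lipConstOn_le {K : ℝ} (hK : 0 ≤ K)
    (h : ∀ s ∈ Icc a b, ∀ t ∈ Icc a b, ‖g s - g t‖ ≤ K * |s - t|) : lipConstOn a b g ≤ K :=
  csInf_le ⟨0, fun _ hL => hL.1⟩ ⟨hK, h⟩

theorem LipschitzOnWith.norm_sub_le_lipConstOn {K : ℝ≥0} (hg : LipschitzOnWith K g (Icc a b))
    {s t : ℝ} (hs : s ∈ Icc a b) (ht : t ∈ Icc a b) :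
    ‖g s - g t‖ ≤ lipConstOn a b g * |s - t| := by
  rcases eq_or_ne s t with rfl | hst
  · simp
  have hpos : 0 < |s - t| := abs_pos.2 (sub_ne_zero.2 hst)
  rw [← div_le_iff₀ hpos]
  refine le_csInf ⟨K, K.2, fun x hx y hy => ?_⟩ fun L hL => (div_le_iff₀ hpos).2 (hL.2 s hs t ht)
  simpa only [dist_eq_norm, Real.norm_eq_abs] using hg.dist_le_mul x hx y hy

theorem lipschitzOnWith_of_norm_sub_le {C : ℝ}
    (hC : ∀ s ∈ Icc a b, ∀ t ∈ Icc a b, ‖g s - g t‖ ≤ C * |s - t|) :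
    LipschitzOnWith C.toNNReal g (Icc a b) :=
  LipschitzOnWith.of_dist_le_mul fun s hs t ht => by
    rw [dist_eq_norm, Real.dist_eq]
    exact (hC s hs t ht).trans (mul_le_mul_of_nonneg_right (Real.le_coe_toNNReal C) (abs_nonneg _))

theorem LipschitzOnWith.lipschitzOnWith_lipConstOn {K : ℝ≥0}
    (hg : LipschitzOnWith K g (Icc a b)) :
    LipschitzOnWith (lipConstOn a b g).toNNReal g (Icc a b) :=
  lipschitzOnWith_of_norm_sub_le fun _ hs _ ht => hg.norm_sub_le_lipConstOn hs ht

theorem lipConstOn_congr (hgh : EqOn g h (Icc a b)) : lipConstOn a b g = lipConstOn a b h := by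
  have hnorm : ∀ s ∈ Icc a b, ∀ t ∈ Icc a b, ‖g s - g t‖ = ‖h s - h t‖ :=
    fun s hs t ht => by rw [hgh hs, hgh ht]
  unfold lipConstOn
  congr 1
  ext L
  refine and_congr_right fun _ => forall₂_congr fun s hs => forall₂_congr fun t ht => ?_
  rw [hnorm s hs t ht]

end SupLip

section Operations

variable {E F R : Type*} [NormedAddCommGroup E] [NormedAddCommGroup F] [NormedRing R]
  {a b : ℝ} {g h : ℝ → E} {Kg Kh : ℝ≥0}

theorem supNormOn_add_le (hab : a ≤ b) (hg : ContinuousOn g (Icc a b))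
    (hh : ContinuousOn h (Icc a b)) :
    supNormOn a b (fun t => g t + h t) ≤ supNormOn a b g + supNormOn a b h :=
  supNormOn_le hab fun _ ht => (norm_add_le _ _).trans
    (add_le_add (norm_le_supNormOn hg ht) (norm_le_supNormOn hh ht))

theorem lipConstOn_add_le (hg : LipschitzOnWith Kg g (Icc a b))
    (hh : LipschitzOnWith Kh h (Icc a b)) :
    lipConstOn a b (fun t => g t + h t) ≤ lipConstOn a b g + lipConstOn a b h := by
  refine lipConstOn_le (add_nonneg (lipConstOn_nonneg g) (lipConstOn_nonneg h))
    fun s hs t ht => ?_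
  calc ‖g s + h s - (g t + h t)‖ = ‖(g s - g t) + (h s - h t)‖ := by rw [add_sub_add_comm]
    _ ≤ ‖g s - g t‖ + ‖h s - h t‖ := norm_add_le _ _
    _ ≤ lipConstOn a b g * |s - t| + lipConstOn a b h * |s - t| :=
      add_le_add (hg.norm_sub_le_lipConstOn hs ht) (hh.norm_sub_le_lipConstOn hs ht)
    _ = _ := (add_mul _ _ _).symm

section NormedSpace

variable [NormedSpace ℝ E] [NormedSpace ℝ F] {C : ℝ}

theorem supNormOn_clm_le (hab : a ≤ b) (T : E →L[ℝ] F) (hC : 0 ≤ C) (hT : ∀ v, ‖T v‖ ≤ C * ‖v‖)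
    (hg : ContinuousOn g (Icc a b)) : supNormOn a b (fun t => T (g t)) ≤ C * supNormOn a b g :=
  supNormOn_le hab fun _ ht => (hT _).trans (mul_le_mul_of_nonneg_left (norm_le_supNormOn hg ht) hC)

theorem lipConstOn_clm_le (T : E →L[ℝ] F) (hC : 0 ≤ C) (hT : ∀ v, ‖T v‖ ≤ C * ‖v‖)
    (hg : LipschitzOnWith Kg g (Icc a b)) :
    lipConstOn a b (fun t => T (g t)) ≤ C * lipConstOn a b g := by
  refine lipConstOn_le (mul_nonneg hC (lipConstOn_nonneg g)) fun s hs t ht => ?_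
  rw [← map_sub, mul_assoc]
  exact (hT _).trans (mul_le_mul_of_nonneg_left (hg.norm_sub_le_lipConstOn hs ht) hC)

end NormedSpace

variable {g h : ℝ → R}

theorem supNormOn_mul_le (hab : a ≤ b) (hg : ContinuousOn g (Icc a b))
    (hh : ContinuousOn h (Icc a b)) :
    supNormOn a b (fun t => g t * h t) ≤ supNormOn a b g * supNormOn a b h :=
  supNormOn_le hab fun _ ht => (norm_mul_le _ _).trans (mul_le_mul (norm_le_supNormOn hg ht)
    (norm_le_supNormOn hh ht) (norm_nonneg _) (supNormOn_nonneg g))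

theorem norm_mul_sub_mul_le (hg : ContinuousOn g (Icc a b)) (hh : ContinuousOn h (Icc a b))
    (hgK : LipschitzOnWith Kg g (Icc a b)) (hhK : LipschitzOnWith Kh h (Icc a b))
    {s t : ℝ} (hs : s ∈ Icc a b) (ht : t ∈ Icc a b) :
    ‖g s * h s - g t * h t‖ ≤
      (supNormOn a b g * lipConstOn a b h + lipConstOn a b g * supNormOn a b h) * |s - t| :=
  calc ‖g s * h s - g t * h t‖ = ‖g s * (h s - h t) + (g s - g t) * h t‖ := by noncomm_ring
    _ ≤ ‖g s‖ * ‖h s - h t‖ + ‖g s - g t‖ * ‖h t‖ :=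
      (norm_add_le _ _).trans (add_le_add (norm_mul_le _ _) (norm_mul_le _ _))
    _ ≤ supNormOn a b g * (lipConstOn a b h * |s - t|)
        + lipConstOn a b g * |s - t| * supNormOn a b h :=
      add_le_add
        (mul_le_mul (norm_le_supNormOn hg hs) (hhK.norm_sub_le_lipConstOn hs ht) (norm_nonneg _)
          (supNormOn_nonneg g))
        (mul_le_mul (hgK.norm_sub_le_lipConstOn hs ht) (norm_le_supNormOn hh ht) (norm_nonneg _)
          (mul_nonneg (lipConstOn_nonneg g) (abs_nonneg _)))
    _ = _ := by ring

end Operations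

section MeanValue

variable {E : Type*} [NormedAddCommGroup E] [NormedSpace ℝ E] {a b : ℝ} {g : ℝ → E}

theorem norm_sub_le_supNormOn_derivWithin_mul (hg : DifferentiableOn ℝ g (Icc a b))
    (hg' : ContinuousOn (derivWithin g (Icc a b)) (Icc a b)) {s t : ℝ} (hs : s ∈ Icc a b)
    (ht : t ∈ Icc a b) :
    ‖g s - g t‖ ≤ supNormOn a b (derivWithin g (Icc a b)) * |s - t| := by
  simpa only [Real.norm_eq_abs] using (convex_Icc a b).norm_image_sub_le_of_norm_derivWithin_le hg
    (fun x hx => norm_le_supNormOn hg' hx) ht hs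

theorem lipschitzOnWith_of_continuousOn_derivWithin (hg : DifferentiableOn ℝ g (Icc a b))
    (hg' : ContinuousOn (derivWithin g (Icc a b)) (Icc a b)) :
    ∃ K, LipschitzOnWith K g (Icc a b) :=
  ⟨_, lipschitzOnWith_of_norm_sub_le fun _ hs _ ht =>
    norm_sub_le_supNormOn_derivWithin_mul hg hg' hs ht⟩

theorem lipConstOn_le_supNormOn_derivWithin (hg : DifferentiableOn ℝ g (Icc a b))
    (hg' : ContinuousOn (derivWithin g (Icc a b)) (Icc a b)) :
    lipConstOn a b g ≤ supNormOn a b (derivWithin g (Icc a b)) :=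
  lipConstOn_le (supNormOn_nonneg _) fun _ hs _ ht =>
    norm_sub_le_supNormOn_derivWithin_mul hg hg' hs ht

theorem LipschitzOnWith.norm_le_lipConstOn_of_hasDerivWithinAt {K : ℝ≥0}
    (hg : LipschitzOnWith K g (Icc a b)) {d : E} {t : ℝ} (hd : HasDerivWithinAt g d (Icc a b) t)
    (ht : t ∈ Ioo a b) : ‖d‖ ≤ lipConstOn a b g := by
  have hnhds : Icc a b ∈ 𝓝 t := Icc_mem_nhds ht.1 ht.2
  simpa only [Real.coe_toNNReal _ (lipConstOn_nonneg g)] using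
    (hd.hasDerivAt hnhds).le_of_lipschitzOn hnhds hg.lipschitzOnWith_lipConstOn

end MeanValue

section Sobolev

variable {E F : Type*} [NormedAddCommGroup E] [NormedSpace ℝ E] [NormedAddCommGroup F]
  [NormedSpace ℝ F] {a b : ℝ} {k : ℕ} {g h φ : ℝ → E}

theorem memW_one_iff : MemW 1 a b g ↔ ∃ K, LipschitzOnWith K g (Icc a b) := by
  simp only [MemW, Nat.cast_zero, contDiffOn_zero, iteratedDerivWithin_zero]
  exact ⟨fun hg => hg.2, fun ⟨K, hK⟩ => ⟨hK.continuousOn, K, hK⟩⟩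

theorem wNorm_one : WNorm 1 a b g = supNormOn a b g + lipConstOn a b g := by
  simp only [WNorm, zero_add, Finset.sum_range_one, iteratedDerivWithin_zero]

theorem wNorm_succ_succ :
    WNorm (k + 2) a b g = supNormOn a b g + WNorm (k + 1) a b (derivWithin g (Icc a b)) := by
  simp only [WNorm, Finset.sum_range_succ' _ (k + 1), iteratedDerivWithin_succ',
    iteratedDerivWithin_zero]
  ring

theorem memW_succ_succ_iff (hab : a < b) :
    MemW (k + 2) a b g ↔
      DifferentiableOn ℝ g (Icc a b) ∧ MemW (k + 1) a b (derivWithin g (Icc a b)) := by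
  simp only [MemW, iteratedDerivWithin_succ', Nat.cast_add, Nat.cast_one]
  rw [contDiffOn_succ_iff_derivWithin (uniqueDiffOn_Icc hab)]
  simp [and_assoc]

theorem wNorm_nonneg : ∀ k, 0 ≤ WNorm k a b g
  | 0 => ENNReal.toReal_nonneg
  | _ + 1 => add_nonneg (Finset.sum_nonneg fun _ _ => supNormOn_nonneg _) (lipConstOn_nonneg _)

theorem supNormOn_le_wNorm : supNormOn a b g ≤ WNorm (k + 1) a b g := by
  have h0 := Finset.single_le_sum (f := fun j => supNormOn a b (iteratedDerivWithin j g (Icc a b)))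
    (fun j _ => supNormOn_nonneg _) (Finset.mem_range.2 k.succ_pos)
  rw [iteratedDerivWithin_zero] at h0
  exact h0.trans (le_add_of_nonneg_right (lipConstOn_nonneg _))

theorem MemW.continuousOn (hg : MemW (k + 1) a b g) : ContinuousOn g (Icc a b) :=
  hg.1.continuousOn

theorem MemW.congr (hg : MemW (k + 1) a b g) (hgh : EqOn g h (Icc a b)) : MemW (k + 1) a b h := by
  obtain ⟨hg, K, hK⟩ := hg
  refine ⟨hg.congr fun t ht => (hgh ht).symm, K, ?_⟩
  exact hK.congr (iteratedDerivWithin_congr hgh)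

theorem wNorm_congr (hgh : EqOn g h (Icc a b)) : WNorm (k + 1) a b g = WNorm (k + 1) a b h := by
  simp only [WNorm, supNormOn_congr (iteratedDerivWithin_congr hgh),
    lipConstOn_congr (iteratedDerivWithin_congr hgh)]

theorem memW_succ_succ_of_eqOn (hab : a < b) (hg : DifferentiableOn ℝ g (Icc a b))
    (hφ : MemW (k + 1) a b φ) (hgφ : EqOn (derivWithin g (Icc a b)) φ (Icc a b)) :
    MemW (k + 2) a b g :=
  (memW_succ_succ_iff hab).2 ⟨hg, hφ.congr hgφ.symm⟩

theorem wNorm_succ_succ_of_eqOn (hgφ : EqOn (derivWithin g (Icc a b)) φ (Icc a b)) :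
    WNorm (k + 2) a b g = supNormOn a b g + WNorm (k + 1) a b φ := by
  rw [wNorm_succ_succ, wNorm_congr hgφ]

theorem MemW.of_succ (hab : a < b) (hg : MemW (k + 2) a b g) : MemW (k + 1) a b g := by
  induction k generalizing g with
  | zero =>
    obtain ⟨hd, hg'⟩ := (memW_succ_succ_iff hab).1 hg
    exact memW_one_iff.2 (lipschitzOnWith_of_continuousOn_derivWithin hd hg'.continuousOn)
  | succ k ih =>
    obtain ⟨hd, hg'⟩ := (memW_succ_succ_iff hab).1 hg
    exact (memW_succ_succ_iff hab).2 ⟨hd, ih hg'⟩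

theorem wNorm_le_wNorm_succ (hab : a < b) (hg : MemW (k + 2) a b g) :
    WNorm (k + 1) a b g ≤ WNorm (k + 2) a b g := by
  induction k generalizing g with
  | zero =>
    obtain ⟨hd, hg'⟩ := (memW_succ_succ_iff hab).1 hg
    rw [wNorm_one, wNorm_succ_succ, wNorm_one]
    linarith [lipConstOn_le_supNormOn_derivWithin hd hg'.continuousOn,
      lipConstOn_nonneg (a := a) (b := b) (derivWithin g (Icc a b))]
  | succ k ih =>
    rw [wNorm_succ_succ, wNorm_succ_succ (k := k + 1)]
    linarith [ih ((memW_succ_succ_iff hab).1 hg).2]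

theorem wNorm_derivWithin_le :
    WNorm (k + 1) a b (derivWithin g (Icc a b)) ≤ WNorm (k + 2) a b g := by
  rw [wNorm_succ_succ]
  linarith [supNormOn_nonneg (a := a) (b := b) g]

theorem iteratedDerivWithin_const_fun (j : ℕ) (c : E) :
    iteratedDerivWithin j (fun _ => c) (Icc a b) = fun _ => if j = 0 then c else 0 :=
  funext fun _ => iteratedDerivWithin_const

theorem memW_const (c : E) : ∀ k, MemW k a b (fun _ => c)
  | 0 => ⟨aestronglyMeasurable_const, ‖c‖, fun _ _ => le_rfl⟩
  | k + 1 => by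
    refine ⟨contDiffOn_const, 0, ?_⟩
    rw [iteratedDerivWithin_const_fun]
    exact (LipschitzWith.const _).lipschitzOnWith

theorem wNorm_zero_fun : ∀ k, WNorm k a b (fun _ => (0 : E)) = 0
  | 0 => by simp only [WNorm, eLpNorm_zero', ENNReal.toReal_zero]
  | k + 1 => by
    have hsup : supNormOn a b (fun _ => (0 : E)) = 0 := by simp [supNormOn]
    have hlip : lipConstOn a b (fun _ => (0 : E)) = 0 :=
      le_antisymm (lipConstOn_le le_rfl fun _ _ _ _ => by simp) (lipConstOn_nonneg _)
    simp only [WNorm, iteratedDerivWithin_const_fun, ite_self, hsup, hlip, Finset.sum_const_zero,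
      add_zero]

end Sobolev

section Closure

variable {E F R : Type*} [NormedAddCommGroup E] [NormedSpace ℝ E] [NormedAddCommGroup F]
  [NormedSpace ℝ F] [NormedRing R] [NormedAlgebra ℝ R] {a b : ℝ} {k : ℕ}

theorem MemW.add {g h : ℝ → E} (hab : a < b) (hg : MemW (k + 1) a b g)
    (hh : MemW (k + 1) a b h) : MemW (k + 1) a b (fun t => g t + h t) := by
  induction k generalizing g h with
  | zero =>
    obtain ⟨Kg, hKg⟩ := memW_one_iff.1 hg
    obtain ⟨Kh, hKh⟩ := memW_one_iff.1 hh
    exact memW_one_iff.2 ⟨_, hKg.add hKh⟩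
  | succ k ih =>
    obtain ⟨hgd, hg'⟩ := (memW_succ_succ_iff hab).1 hg
    obtain ⟨hhd, hh'⟩ := (memW_succ_succ_iff hab).1 hh
    exact memW_succ_succ_of_eqOn hab (hgd.add hhd) (ih hg' hh')
      fun t ht => derivWithin_fun_add (hgd t ht) (hhd t ht)

theorem wNorm_add_le {g h : ℝ → E} (hab : a < b) (hg : MemW (k + 1) a b g)
    (hh : MemW (k + 1) a b h) :
    WNorm (k + 1) a b (fun t => g t + h t) ≤ WNorm (k + 1) a b g + WNorm (k + 1) a b h := by
  induction k generalizing g h with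
  | zero =>
    obtain ⟨Kg, hKg⟩ := memW_one_iff.1 hg
    obtain ⟨Kh, hKh⟩ := memW_one_iff.1 hh
    rw [wNorm_one, wNorm_one, wNorm_one]
    linarith [supNormOn_add_le hab.le hg.continuousOn hh.continuousOn, lipConstOn_add_le hKg hKh]
  | succ k ih =>
    obtain ⟨hgd, hg'⟩ := (memW_succ_succ_iff hab).1 hg
    obtain ⟨hhd, hh'⟩ := (memW_succ_succ_iff hab).1 hh
    rw [wNorm_succ_succ_of_eqOn fun t ht => derivWithin_fun_add (hgd t ht) (hhd t ht),
      wNorm_succ_succ, wNorm_succ_succ]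
    linarith [supNormOn_add_le hab.le hg.continuousOn hh.continuousOn, ih hg' hh']

theorem derivWithin_clm_comp_eqOn (hab : a < b) (T : E →L[ℝ] F) {g : ℝ → E}
    (hg : DifferentiableOn ℝ g (Icc a b)) :
    EqOn (derivWithin (fun t => T (g t)) (Icc a b)) (fun t => T (derivWithin g (Icc a b) t))
      (Icc a b) := fun t ht =>
  (T.hasFDerivAt.comp_hasDerivWithinAt t (hg t ht).hasDerivWithinAt).derivWithin
    (uniqueDiffOn_Icc hab t ht)

theorem MemW.clm (hab : a < b) (T : E →L[ℝ] F) :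
    ∀ {k : ℕ} {g : ℝ → E}, MemW k a b g → MemW k a b (fun t => T (g t))
  | 0, _, ⟨hm, C, hC⟩ =>
    ⟨T.continuous.comp_aestronglyMeasurable hm, ‖T‖ * C, fun _ ht => T.le_opNorm_of_le (hC _ ht)⟩
  | 1, _, hg => by
    obtain ⟨K, hK⟩ := memW_one_iff.1 hg
    exact memW_one_iff.2 ⟨_, T.lipschitz.comp_lipschitzOnWith hK⟩
  | _ + 2, _, hg => by
    obtain ⟨hd, hg'⟩ := (memW_succ_succ_iff hab).1 hg
    exact memW_succ_succ_of_eqOn hab (T.differentiable.comp_differentiableOn hd) (hg'.clm hab T)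
      (derivWithin_clm_comp_eqOn hab T hd)

theorem wNorm_clm_le {g : ℝ → E} (hab : a < b) (T : E →L[ℝ] F) {C : ℝ} (hC : 0 ≤ C)
    (hT : ∀ v, ‖T v‖ ≤ C * ‖v‖) (hg : MemW (k + 1) a b g) :
    WNorm (k + 1) a b (fun t => T (g t)) ≤ C * WNorm (k + 1) a b g := by
  induction k generalizing g with
  | zero =>
    obtain ⟨K, hK⟩ := memW_one_iff.1 hg
    rw [wNorm_one, wNorm_one, mul_add]
    exact add_le_add (supNormOn_clm_le hab.le T hC hT hg.continuousOn)
      (lipConstOn_clm_le T hC hT hK)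
  | succ k ih =>
    obtain ⟨hd, hg'⟩ := (memW_succ_succ_iff hab).1 hg
    rw [wNorm_succ_succ_of_eqOn (derivWithin_clm_comp_eqOn hab T hd), wNorm_succ_succ, mul_add]
    exact add_le_add (supNormOn_clm_le hab.le T hC hT hg.continuousOn) (ih hg')

theorem MemW.neg {g : ℝ → E} (hab : a < b) (hg : MemW (k + 1) a b g) :
    MemW (k + 1) a b (fun t => -g t) :=
  hg.clm hab (-ContinuousLinearMap.id ℝ E)

theorem wNorm_neg_le {g : ℝ → E} (hab : a < b) (hg : MemW (k + 1) a b g) :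
    WNorm (k + 1) a b (fun t => -g t) ≤ WNorm (k + 1) a b g :=
  (one_mul (WNorm (k + 1) a b g)).symm ▸
    wNorm_clm_le hab (-ContinuousLinearMap.id ℝ E) zero_le_one (fun v => by simp) hg

theorem MemW.sub {g h : ℝ → E} (hab : a < b) (hg : MemW (k + 1) a b g)
    (hh : MemW (k + 1) a b h) : MemW (k + 1) a b (fun t => g t - h t) := by
  simpa only [sub_eq_add_neg] using hg.add hab (hh.neg hab)

theorem MemW.mul {g h : ℝ → R} (hab : a < b) (hg : MemW (k + 1) a b g)
    (hh : MemW (k + 1) a b h) : MemW (k + 1) a b (fun t => g t * h t) := by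
  induction k generalizing g h with
  | zero =>
    obtain ⟨Kg, hKg⟩ := memW_one_iff.1 hg
    obtain ⟨Kh, hKh⟩ := memW_one_iff.1 hh
    exact memW_one_iff.2 ⟨_, lipschitzOnWith_of_norm_sub_le fun s hs t ht =>
      norm_mul_sub_mul_le hg.continuousOn hh.continuousOn hKg hKh hs ht⟩
  | succ k ih =>
    obtain ⟨hgd, hg'⟩ := (memW_succ_succ_iff hab).1 hg
    obtain ⟨hhd, hh'⟩ := (memW_succ_succ_iff hab).1 hh
    exact memW_succ_succ_of_eqOn hab (hgd.mul hhd)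
      ((ih hg' (hh.of_succ hab)).add hab (ih (hg.of_succ hab) hh'))
      fun t ht => derivWithin_fun_mul (hgd t ht) (hhd t ht)

-- `3 ^ k`: the Leibniz rule turns a constant `c` for order `k` into `1 + 2c ≤ 3c` for `k + 1`.
theorem wNorm_mul_le {g h : ℝ → R} (hab : a < b) (hg : MemW (k + 1) a b g)
    (hh : MemW (k + 1) a b h) :
    WNorm (k + 1) a b (fun t => g t * h t) ≤
      3 ^ k * (WNorm (k + 1) a b g * WNorm (k + 1) a b h) := by
  induction k generalizing g h with
  | zero =>
    obtain ⟨Kg, hKg⟩ := memW_one_iff.1 hg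
    obtain ⟨Kh, hKh⟩ := memW_one_iff.1 hh
    have hsup := supNormOn_mul_le hab.le hg.continuousOn hh.continuousOn
    have hlip := lipConstOn_le (add_nonneg
        (mul_nonneg (supNormOn_nonneg g) (lipConstOn_nonneg h))
        (mul_nonneg (lipConstOn_nonneg g) (supNormOn_nonneg h)))
      fun s hs t ht => norm_mul_sub_mul_le hg.continuousOn hh.continuousOn hKg hKh hs ht
    rw [wNorm_one, wNorm_one, wNorm_one, pow_zero, one_mul]
    nlinarith [mul_nonneg (lipConstOn_nonneg (a := a) (b := b) g)
      (lipConstOn_nonneg (a := a) (b := b) h)]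
  | succ k ih =>
    obtain ⟨hgd, hg'⟩ := (memW_succ_succ_iff hab).1 hg
    obtain ⟨hhd, hh'⟩ := (memW_succ_succ_iff hab).1 hh
    have hprod {x y : ℝ} (hx : 0 ≤ x) (hy : 0 ≤ y) (hxg : x ≤ WNorm (k + 2) a b g)
        (hyh : y ≤ WNorm (k + 2) a b h) : x * y ≤ WNorm (k + 2) a b g * WNorm (k + 2) a b h :=
      mul_le_mul hxg hyh hy (hx.trans hxg)
    have h₁ := hprod (supNormOn_nonneg g) (supNormOn_nonneg h) supNormOn_le_wNorm
      supNormOn_le_wNorm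
    have h₂ := hprod (wNorm_nonneg _) (wNorm_nonneg _) wNorm_derivWithin_le
      (wNorm_le_wNorm_succ hab hh)
    have h₃ := hprod (wNorm_nonneg _) (wNorm_nonneg _) (wNorm_le_wNorm_succ hab hg)
      wNorm_derivWithin_le
    have hP : 0 ≤ WNorm (k + 2) a b g * WNorm (k + 2) a b h :=
      mul_nonneg (wNorm_nonneg _) (wNorm_nonneg _)
    calc WNorm (k + 2) a b (fun t => g t * h t)
        = supNormOn a b (fun t => g t * h t) + WNorm (k + 1) a b (fun t =>
            derivWithin g (Icc a b) t * h t + g t * derivWithin h (Icc a b) t) :=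
          wNorm_succ_succ_of_eqOn fun t ht => derivWithin_fun_mul (hgd t ht) (hhd t ht)
      _ ≤ supNormOn a b g * supNormOn a b h + (3 ^ k * (WNorm (k + 1) a b
            (derivWithin g (Icc a b)) * WNorm (k + 1) a b h) + 3 ^ k * (WNorm (k + 1) a b g *
              WNorm (k + 1) a b (derivWithin h (Icc a b)))) :=
          add_le_add (supNormOn_mul_le hab.le hg.continuousOn hh.continuousOn)
            ((wNorm_add_le hab (hg'.mul hab (hh.of_succ hab)) ((hg.of_succ hab).mul hab hh')).trans
              (add_le_add (ih hg' (hh.of_succ hab)) (ih (hg.of_succ hab) hh')))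
      _ ≤ 3 ^ (k + 1) * (WNorm (k + 2) a b g * WNorm (k + 2) a b h) := by
          have h3k : (1 : ℝ) ≤ 3 ^ k := one_le_pow₀ (by norm_num)
          rw [pow_succ]
          nlinarith

end Closure

section Sums

variable {E : Type*} [NormedAddCommGroup E] [NormedSpace ℝ E] {a b : ℝ} {k : ℕ}
  {ι : Type*} (s : Finset ι) {φ : ι → ℝ → E}

theorem memW_sum (hab : a < b) (hφ : ∀ i ∈ s, MemW (k + 1) a b (φ i)) :
    MemW (k + 1) a b (fun t => ∑ i ∈ s, φ i t) := by
  induction s using Finset.cons_induction with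
  | empty => simpa only [Finset.sum_empty] using memW_const (0 : E) (k + 1)
  | cons i s hi ih =>
    simp only [Finset.sum_cons]
    exact (hφ i (s.mem_cons_self i)).add hab (ih fun j hj => hφ j (Finset.mem_cons_of_mem hj))

theorem wNorm_sum_le (hab : a < b) (hφ : ∀ i ∈ s, MemW (k + 1) a b (φ i)) :
    WNorm (k + 1) a b (fun t => ∑ i ∈ s, φ i t) ≤ ∑ i ∈ s, WNorm (k + 1) a b (φ i) := by
  induction s using Finset.cons_induction with
  | empty => simp only [Finset.sum_empty, wNorm_zero_fun, le_refl]
  | cons i s hi ih =>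
    have hs : ∀ j ∈ s, MemW (k + 1) a b (φ j) := fun j hj => hφ j (Finset.mem_cons_of_mem hj)
    simp only [Finset.sum_cons]
    exact (wNorm_add_le hab (hφ i (s.mem_cons_self i)) (memW_sum s hab hs)).trans
      (add_le_add le_rfl (ih hs))

end Sums

section Columns

open scoped Matrix

variable {ι : Type*} [Fintype ι] [DecidableEq ι]

def colCLM (j : ι) : (ι → ℂ) →L[ℝ] Matrix ι ι ℂ :=
  LinearMap.toContinuousLinearMap
    { toFun := fun v => Matrix.vecMulVec v (Pi.single j 1)
      map_add' := fun v w => Matrix.add_vecMulVec v w _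
      map_smul' := fun r v => Matrix.smul_vecMulVec r v _ }

def mulVecCLM (v : ι → ℂ) : Matrix ι ι ℂ →L[ℝ] (ι → ℂ) :=
  LinearMap.toContinuousLinearMap
    { toFun := fun M => M *ᵥ v
      map_add' := fun M N => Matrix.add_mulVec M N v
      map_smul' := fun r M => Matrix.smul_mulVec r M v }

theorem colCLM_apply (j : ι) (v : ι → ℂ) : colCLM j v = Matrix.vecMulVec v (Pi.single j 1) :=
  rfl

theorem norm_colCLM_le (j : ι) (v : ι → ℂ) : ‖colCLM j v‖ ≤ ‖v‖ := by
  rw [colCLM_apply, Matrix.vecMulVec_eq Unit]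
  refine (Matrix.linfty_opNorm_mul _ _).trans ?_
  rw [Matrix.linfty_opNorm_replicateCol, Matrix.linfty_opNorm_replicateRow]
  simp [Pi.single_apply, apply_ite, Finset.sum_ite_eq']

theorem mul_sum_colCLM (M : Matrix ι ι ℂ) (v : ι → ι → ℂ) :
    M * ∑ j, colCLM j (v j) = ∑ j, colCLM j (M *ᵥ v j) := by
  simp only [Finset.mul_sum, colCLM_apply, Matrix.mul_vecMulVec]

theorem sum_colCLM_single : ∑ j : ι, colCLM j (Pi.single j 1) = 1 := by
  ext i i'
  simp [colCLM_apply, Matrix.sum_apply, Matrix.vecMulVec_apply, Pi.single_apply, Matrix.one_apply]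

theorem hasDerivWithinAt_sum_colCLM {A₀ A₁ : ℝ → Matrix ι ι ℂ} {y : ι → ℝ → ι → ℂ} {s : Set ℝ}
    {t : ℝ} (hy : ∀ j, HasDerivWithinAt (y j) (A₀ t *ᵥ Pi.single j 1 - A₁ t *ᵥ y j t) s t) :
    HasDerivWithinAt (fun u => ∑ j, colCLM j (y j u - Pi.single j 1))
      (-(A₁ t - A₀ t) - A₁ t * ∑ j, colCLM j (y j t - Pi.single j 1)) s t := by
  have hderiv : ∑ j, colCLM j (A₀ t *ᵥ Pi.single j 1 - A₁ t *ᵥ y j t) =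
      -(A₁ t - A₀ t) - A₁ t * ∑ j, colCLM j (y j t - Pi.single j 1) := by
    simp only [map_sub, Finset.sum_sub_distrib, ← mul_sum_colCLM, sum_colCLM_single, mul_one,
      mul_sub]
    abel
  exact (HasDerivWithinAt.fun_sum fun j _ => (colCLM j).hasFDerivAt.comp_hasDerivWithinAt t
    ((hy j).sub_const (Pi.single j 1))).congr_deriv hderiv

end Columns

section Absorption

variable {E R : Type*} [NormedAddCommGroup E] [NormedSpace ℝ E] [NormedRing R]
  [NormedAlgebra ℝ R] {a b : ℝ} {k : ℕ} {A₀ A₁ Z : ℝ → R}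

theorem wNorm_zero_le_of_ae_bound {g : ℝ → E} {C : ℝ} (hC : 0 ≤ C)
    (hg : ∀ᵐ t ∂volume.restrict (Icc a b), ‖g t‖ ≤ C) : WNorm 0 a b g ≤ C :=
  ENNReal.toReal_le_of_le_ofReal hC (eLpNorm_exponent_top.trans_le
    (eLpNormEssSup_le_of_ae_bound hg))

theorem wNorm_zero_sub_le_of_hasDerivWithinAt (hab : a < b) {K : ℝ}
    (hA₀ : ∀ t ∈ Icc a b, ‖A₀ t‖ ≤ K) (hZ : MemW 1 a b Z)
    (hZ' : ∀ᵐ t ∂volume.restrict (Icc a b),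
      HasDerivWithinAt Z (-(A₁ t - A₀ t) - A₁ t * Z t) (Icc a b) t)
    (hsmall : WNorm 1 a b Z ≤ 2⁻¹) :
    WNorm 0 a b (fun t => A₁ t - A₀ t) ≤ 2 * (1 + K) * WNorm 1 a b Z := by
  obtain ⟨L, hL⟩ := memW_one_iff.1 hZ
  have hK : 0 ≤ K := (norm_nonneg _).trans (hA₀ a (left_mem_Icc.2 hab.le))
  have hδ : 0 ≤ WNorm 1 a b Z := wNorm_nonneg 1
  have hIoo : ∀ᵐ t ∂volume.restrict (Icc a b), t ∈ Ioo a b := by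
    rw [← Measure.restrict_congr_set Ioo_ae_eq_Icc]
    exact ae_restrict_mem measurableSet_Ioo
  refine wNorm_zero_le_of_ae_bound (mul_nonneg (by linarith) hδ) ?_
  filter_upwards [hZ', hIoo] with t hd ht
  have hZ't : ‖-(A₁ t - A₀ t) - A₁ t * Z t‖ ≤ WNorm 1 a b Z :=
    (hL.norm_le_lipConstOn_of_hasDerivWithinAt hd ht).trans
      (wNorm_one (g := Z) ▸ le_add_of_nonneg_left (supNormOn_nonneg Z))
  have hZt : ‖Z t‖ ≤ WNorm 1 a b Z :=
    (norm_le_supNormOn hZ.continuousOn (Ioo_subset_Icc_self ht)).trans supNormOn_le_wNorm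
  have hA₁t : ‖A₁ t‖ ≤ K + ‖A₁ t - A₀ t‖ :=
    (norm_le_insert' _ _).trans (add_le_add (hA₀ t (Ioo_subset_Icc_self ht)) le_rfl)
  have hM : ‖A₁ t - A₀ t‖ ≤ WNorm 1 a b Z + (K + ‖A₁ t - A₀ t‖) * WNorm 1 a b Z :=
    calc ‖A₁ t - A₀ t‖ = ‖-(-(A₁ t - A₀ t) - A₁ t * Z t) - A₁ t * Z t‖ := by
          rw [neg_sub, sub_sub_cancel_left, neg_neg]
      _ ≤ ‖-(A₁ t - A₀ t) - A₁ t * Z t‖ + ‖A₁ t‖ * ‖Z t‖ :=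
          (norm_sub_le _ _).trans (by rw [norm_neg]; exact add_le_add le_rfl (norm_mul_le _ _))
      _ ≤ _ := add_le_add hZ't (mul_le_mul hA₁t hZt (norm_nonneg _) (by positivity))
  nlinarith [norm_nonneg (A₁ t - A₀ t)]

theorem wNorm_succ_sub_le_of_hasDerivWithinAt (hab : a < b) (hA₀ : MemW (k + 1) a b A₀)
    (hA₁ : MemW (k + 1) a b A₁) (hZ : MemW (k + 2) a b Z)
    (hZ' : ∀ᵐ t ∂volume.restrict (Icc a b),
      HasDerivWithinAt Z (-(A₁ t - A₀ t) - A₁ t * Z t) (Icc a b) t)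
    (hsmall : WNorm (k + 2) a b Z ≤ (2 * 3 ^ k)⁻¹) :
    WNorm (k + 1) a b (fun t => A₁ t - A₀ t) ≤
      2 * (1 + 3 ^ k * WNorm (k + 1) a b A₀) * WNorm (k + 2) a b Z := by
  set M := fun t => A₁ t - A₀ t
  have hM : MemW (k + 1) a b M := hA₁.sub hab hA₀
  obtain ⟨-, hZ'_mem⟩ := (memW_succ_succ_iff hab).1 hZ
  have hZ₁ := hZ.of_succ hab
  have hderiv : EqOn (derivWithin Z (Icc a b)) (fun t => -M t - A₁ t * Z t) (Icc a b) := by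
    refine Measure.eqOn_Icc_of_ae_eq volume hab.ne ?_ hZ'_mem.continuousOn
      (hM.continuousOn.neg.sub (hA₁.continuousOn.mul hZ.continuousOn))
    filter_upwards [hZ', ae_restrict_mem measurableSet_Icc] with t hd ht
    exact hd.derivWithin (uniqueDiffOn_Icc hab t ht)
  have hM_eq : EqOn M (fun t => -(derivWithin Z (Icc a b) t + A₀ t * Z t + M t * Z t)) (Icc a b) :=
    fun t ht => by
      simp only [hderiv ht, M]
      noncomm_ring
  have hA₀Z := hA₀.mul hab hZ₁
  have hMZ := hM.mul hab hZ₁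
  have hbound : WNorm (k + 1) a b M ≤ WNorm (k + 2) a b Z +
      3 ^ k * (WNorm (k + 1) a b A₀ * WNorm (k + 2) a b Z) +
      3 ^ k * (WNorm (k + 1) a b M * WNorm (k + 2) a b Z) :=
    calc WNorm (k + 1) a b M
        = WNorm (k + 1) a b (fun t => -(derivWithin Z (Icc a b) t + A₀ t * Z t + M t * Z t)) :=
          wNorm_congr hM_eq
      _ ≤ WNorm (k + 1) a b (fun t => derivWithin Z (Icc a b) t + A₀ t * Z t + M t * Z t) :=
          wNorm_neg_le hab ((hZ'_mem.add hab hA₀Z).add hab hMZ)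
      _ ≤ WNorm (k + 1) a b (derivWithin Z (Icc a b)) + WNorm (k + 1) a b (fun t => A₀ t * Z t)
          + WNorm (k + 1) a b (fun t => M t * Z t) :=
          (wNorm_add_le hab (hZ'_mem.add hab hA₀Z) hMZ).trans
            (add_le_add (wNorm_add_le hab hZ'_mem hA₀Z) le_rfl)
      _ ≤ WNorm (k + 1) a b (derivWithin Z (Icc a b))
          + 3 ^ k * (WNorm (k + 1) a b A₀ * WNorm (k + 1) a b Z)
          + 3 ^ k * (WNorm (k + 1) a b M * WNorm (k + 1) a b Z) :=
          add_le_add (add_le_add le_rfl (wNorm_mul_le hab hA₀ hZ₁)) (wNorm_mul_le hab hM hZ₁)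
      _ ≤ _ := by
          have hW := wNorm_le_wNorm_succ hab hZ
          have := wNorm_nonneg (a := a) (b := b) (g := A₀) (k + 1)
          have := wNorm_nonneg (a := a) (b := b) (g := M) (k + 1)
          gcongr
          exact wNorm_derivWithin_le
  have hsmall' : 3 ^ k * WNorm (k + 2) a b Z ≤ 2⁻¹ :=
    calc 3 ^ k * WNorm (k + 2) a b Z ≤ 3 ^ k * (2 * 3 ^ k)⁻¹ := by gcongr
      _ = 2⁻¹ := by field_simp
  nlinarith [wNorm_nonneg (a := a) (b := b) (g := M) (k + 1)]

end Absorption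

section BoundaryValueProblem

open scoped Matrix

variable {m n k : ℕ} {a b ε₀ : ℝ} {A : ℝ → ℝ → Matrix (Fin m) (Fin m) ℂ}
  {B : ℝ → (ℝ → (Fin m → ℂ)) → (Fin m → ℂ)}

theorem isBVPSol_const (A : ℝ → Matrix (Fin m) (Fin m) ℂ) (B : (ℝ → (Fin m → ℂ)) → (Fin m → ℂ))
    (v : Fin m → ℂ) : IsBVPSol (k + 1) a b A B (fun t => A t *ᵥ v) (B fun _ => v) (fun _ => v) :=
  ⟨memW_const v _, .of_forall fun t => by
    simpa only [sub_self] using hasDerivWithinAt_const t (Icc a b) v, rfl⟩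

theorem ContDep.exists_tendsto_wNorm_sub (h : ContDep n a b ε₀ A B)
    {f : ℝ → (Fin m → ℂ)} (hf : MemW (n - 1) a b f) {c : Fin m → ℂ} {y₀ : ℝ → (Fin m → ℂ)}
    (hy₀ : IsBVPSol n a b (A 0) (B 0) f c y₀) :
    ∃ y : ℝ → ℝ → (Fin m → ℂ), (∀ᶠ ε in 𝓝[>] 0, IsBVPSol n a b (A ε) (B ε) f c (y ε)) ∧
      Tendsto (fun ε => WNorm n a b (fun t => y ε t - y₀ t)) (𝓝[>] 0) (𝓝 0) := by
  obtain ⟨ε₁, hε₁, -, hsolv, hcont⟩ := h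
  choose! Y hY using fun ε (hε : ε ∈ Ioo 0 ε₁) => (hsolv ε (Ioo_subset_Ico_self hε) f hf c).1
  set y := Function.update Y 0 y₀
  have hy : ∀ ε ∈ Ico 0 ε₁, IsBVPSol n a b (A ε) (B ε) f c (y ε) := by
    rintro ε ⟨hε0, hε⟩
    rcases hε0.eq_or_lt with rfl | hpos
    · simpa only [y, Function.update_self] using hy₀
    · simpa only [y, Function.update_of_ne hpos.ne'] using hY ε ⟨hpos, hε⟩
  refine ⟨y, ?_, ?_⟩
  · filter_upwards [Ioo_mem_nhdsGT hε₁] with ε hε using hy ε ⟨hε.1.le, hε.2⟩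
  · simpa only [y, Function.update_self] using hcont (fun _ => f) (fun _ => c) y (fun _ _ => hf)
      (by simp only [sub_self, wNorm_zero_fun, tendsto_const_nhds]) tendsto_const_nhds hy

theorem ContDep.exists_deviation_tendsto_zero (hab : a < b) (h : ContDep (k + 1) a b ε₀ A B)
    (hA₀ : MemW k a b (A 0)) :
    ∃ Z : ℝ → ℝ → Matrix (Fin m) (Fin m) ℂ,
      (∀ᶠ ε in 𝓝[>] 0, MemW (k + 1) a b (Z ε) ∧ ∀ᵐ t ∂volume.restrict (Icc a b),
        HasDerivWithinAt (Z ε) (-(A ε t - A 0 t) - A ε t * Z ε t) (Icc a b) t) ∧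
      Tendsto (fun ε => WNorm (k + 1) a b (Z ε)) (𝓝[>] 0) (𝓝 0) := by
  have hf (j : Fin m) : MemW (k + 1 - 1) a b (fun t => A 0 t *ᵥ Pi.single j 1) := by
    rw [Nat.add_sub_cancel]
    exact hA₀.clm hab (mulVecCLM (Pi.single j 1))
  choose y hy hlim using fun j =>
    h.exists_tendsto_wNorm_sub (hf j) (isBVPSol_const (A 0) (B 0) (Pi.single j 1))
  have hmem : ∀ᶠ ε in 𝓝[>] 0, ∀ j, MemW (k + 1) a b (fun t => y j ε t - Pi.single j 1) :=
    (eventually_all.2 hy).mono fun ε hε j => (hε j).1.sub hab (memW_const _ _)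
  refine ⟨fun ε t => ∑ j, colCLM j (y j ε t - Pi.single j 1), ?_, ?_⟩
  · filter_upwards [eventually_all.2 hy, hmem] with ε hε hεmem
    refine ⟨memW_sum _ hab fun j _ => (hεmem j).clm hab _, ?_⟩
    filter_upwards [ae_all_iff.2 fun j => (hε j).2.1] with t ht
    exact hasDerivWithinAt_sum_colCLM ht
  · refine squeeze_zero' (.of_forall fun _ => wNorm_nonneg _) ?_
      (by simpa using tendsto_finsetSum Finset.univ fun j _ => hlim j)
    filter_upwards [hmem] with ε hε
    have hcol (j : Fin m) (v : Fin m → ℂ) : ‖colCLM j v‖ ≤ 1 * ‖v‖ :=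
      (norm_colCLM_le j v).trans_eq (one_mul _).symm
    exact (wNorm_sum_le _ hab fun j _ => (hε j).clm hab _).trans (Finset.sum_le_sum fun j _ =>
      (wNorm_clm_le hab _ zero_le_one (hcol j) (hε j)).trans_eq (one_mul _))

end BoundaryValueProblem

theorem continuous_dependence_implies_condI_general
    (m n : ℕ) (hn : 1 ≤ n) (a b : ℝ) (hab : a < b)
    (ε₀ : ℝ)
    (A : ℝ → ℝ → Matrix (Fin m) (Fin m) ℂ)
    (B : ℝ → (ℝ → (Fin m → ℂ)) → (Fin m → ℂ))
    (hA : ∀ ε ∈ Ico (0:ℝ) ε₀, MemW (n-1) a b (A ε))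
    (h : ContDep n a b ε₀ A B) :
    CondI n a b A := by
  obtain ⟨k, rfl⟩ : ∃ k, n = k + 1 := ⟨n - 1, by omega⟩
  simp only [Nat.add_sub_cancel] at hA
  have hε₀ : 0 < ε₀ := by
    obtain ⟨ε₁, hε₁, hε₁₀, -⟩ := h
    exact hε₁.trans hε₁₀
  have hA₀ : MemW k a b (A 0) := hA 0 ⟨le_rfl, hε₀⟩
  obtain ⟨Z, hZ, hZ_lim⟩ := h.exists_deviation_tendsto_zero hab hA₀
  rcases k with _ | k
  · obtain ⟨-, K, hK⟩ := hA₀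
    refine squeeze_zero' (.of_forall fun _ => wNorm_nonneg _) ?_
      (by simpa using hZ_lim.const_mul (2 * (1 + K)))
    filter_upwards [hZ, hZ_lim.eventually (ge_mem_nhds (by norm_num : (0 : ℝ) < 2⁻¹))]
      with ε ⟨hZm, hZd⟩ hsmall
    exact wNorm_zero_sub_le_of_hasDerivWithinAt hab hK hZm hZd hsmall
  · refine squeeze_zero' (.of_forall fun _ => wNorm_nonneg _) ?_
      (by simpa using hZ_lim.const_mul (2 * (1 + 3 ^ k * WNorm (k + 1) a b (A 0))))
    filter_upwards [hZ, hZ_lim.eventually (ge_mem_nhds (by positivity : (0 : ℝ) < (2 * 3 ^ k)⁻¹)),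
      Ioo_mem_nhdsGT hε₀] with ε ⟨hZm, hZd⟩ hsmall hε
    exact wNorm_succ_sub_le_of_hasDerivWithinAt hab hA₀ (hA ε ⟨hε.1.le, hε.2⟩) hZm hZd hsmall

/-- Step 1 of the proof of Theorem 1. If the solutions of BVP(ε)
depend continuously on `ε` at `ε = 0`, then condition (I) holds:
`‖A(·;ε) − A(·;0)‖_{n−1,∞} → 0` as `ε → 0+`. -/
theorem continuous_dependence_implies_condI
    (m n : ℕ) (hm : 1 ≤ m) (hn : 1 ≤ n) (a b : ℝ) (hab : a < b)
    (ε₀ : ℝ) (hε₀ : 0 < ε₀)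
    (A : ℝ → ℝ → Matrix (Fin m) (Fin m) ℂ)
    (B : ℝ → (ℝ → (Fin m → ℂ)) → (Fin m → ℂ))
    (hA : ∀ ε ∈ Ico (0:ℝ) ε₀, MemW (n-1) a b (A ε))
    (hB : ∀ ε ∈ Ico (0:ℝ) ε₀, BoundedLinearB n a b (B ε))
    (h : ContDep n a b ε₀ A B) :
    CondI n a b A :=
  continuous_dependence_implies_condI_general m n hn a b hab ε₀ A B hA h
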